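/- arXiv:2307.16868 — 3 statements merged into one kernel-verified Lean document; each statement's English description precedes it below -/
import Mathlib

section
/- There exists a closed 7-prince's tour on the 8×8 chessboard; that is, the graph whose vertices are the cells of the 8×8 board, with two cells (i,j) and (u,v) adjacent if and only if |i-u|+|j-v| = 7, has a Hamiltonian cycle. -/
/-!
A cyclic enumeration `f : Fin N → V` of all vertices with `f i` adjacent to `f (i + 1)` is a
bijective homomorphism from the cycle graph on `Fin N`, and such homomorphisms carry the standard
Hamiltonian cycle of the cycle graph to a Hamiltonian cycle of the target. For the 7-prince graph on
the 8 × 8 board such an enumeration is written down explicitly; that it is one is a finite check.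
-/

/-- The `k`-prince graph on an `m × n` board: cells `(i,j)` and `(u,v)` are adjacent
iff `|i - u| + |j - v| = k`. -/
def princeGraph (m n k : ℕ) : SimpleGraph (Fin m × Fin n) where
  Adj p q := p ≠ q ∧ |(p.1 : ℤ) - (q.1 : ℤ)| + |(p.2 : ℤ) - (q.2 : ℤ)| = k
  symm := ⟨by
    rintro p q ⟨hne, h⟩
    refine ⟨hne.symm, ?_⟩
    rw [abs_sub_comm ((q.1 : ℤ)), abs_sub_comm ((q.2 : ℤ))]
    exact h⟩
  loopless := ⟨fun p h => h.1 rfl⟩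

namespace SimpleGraph

variable {V : Type*} {G : SimpleGraph V}

theorem cycleGraph.isHamiltonianCycle_cycle (n : ℕ) :
    (cycleGraph.cycle n).IsHamiltonianCycle :=
  Walk.isHamiltonianCycle_iff_isCycle_and_length_eq.mpr ⟨cycleGraph.isCycle_cycle, by simp⟩

def cycleGraph.homOfAdjSucc {n : ℕ} (f : Fin (n + 2) → V) (hf : ∀ i, G.Adj (f i) (f (i + 1))) :
    cycleGraph (n + 2) →g G where
  toFun := f
  map_rel' {u v} huv := by
    rcases cycleGraph_adj.mp huv with h | h <;> rw [sub_eq_iff_eq_add'] at h <;> subst h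
    exacts [(hf v).symm, hf u]

theorem exists_isHamiltonianCycle_of_bijective_of_adj_succ [DecidableEq V] {n : ℕ}
    (f : Fin (n + 3) → V) (hf : f.Bijective) (hadj : ∀ i, G.Adj (f i) (f (i + 1))) :
    ∃ (v : V) (p : G.Walk v v), p.IsHamiltonianCycle :=
  ⟨_, _, (cycleGraph.isHamiltonianCycle_cycle n).map (f := cycleGraph.homOfAdjSucc f hadj) hf⟩

end SimpleGraph

instance (m n k : ℕ) : DecidableRel (princeGraph m n k).Adj := fun p q =>
  inferInstanceAs (Decidable (p ≠ q ∧ _))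

def princeTour : Fin 64 → Fin 8 × Fin 8 :=
  ![(0,0), (3,4), (6,0), (2,3), (7,1), (4,5), (0,2), (5,4), (1,1), (3,6), (2,0), (6,3), (1,5),
    (5,2), (2,6), (0,1), (4,4), (0,7), (3,3), (6,7), (2,4), (7,2), (3,5), (1,0), (5,3), (2,7),
    (4,2), (7,6), (0,6), (4,3), (1,7), (3,2), (5,7), (6,1), (7,7), (1,6), (7,5), (0,5), (3,1),
    (5,6), (1,3), (5,0), (6,6), (4,1), (0,4), (6,5), (2,2), (7,0), (5,5), (1,2), (4,6), (2,1),
    (6,4), (3,0), (3,7), (7,4), (4,0), (0,3), (5,1), (1,4), (6,2), (4,7), (7,3), (2,5)]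

theorem princeTour_bijective : princeTour.Bijective := by
  decide +kernel

theorem princeTour_adj_succ :
    ∀ i, (princeGraph 8 8 7).Adj (princeTour i) (princeTour (i + 1)) := by
  decide +kernel

/-- There exists a closed 7-prince's tour on the 8×8 chessboard. -/
theorem prince7_tour_8x8 :
    ∃ (v : Fin 8 × Fin 8) (p : (princeGraph 8 8 7).Walk v v), p.IsHamiltonianCycle :=
  SimpleGraph.exists_isHamiltonianCycle_of_bijective_of_adj_succ princeTour
    princeTour_bijective princeTour_adj_succ
end

section
/- For a positive integer k, there exists a closed k-prince's tour on the 8×8 chessboard if and only if k is odd and k ≤ 7. -/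
/-!
Each move of a `k`-prince changes `i + j` by `k` modulo `2`, so for even `k` the two colour
classes of the board are never connected, and no tour exists. The cell `(3, 3)` is at taxicab
distance at most `8` from every cell, so for `k ≥ 9` it has no neighbour at all. For
`k = 1, 3, 5, 7` an explicit tour is exhibited.
-/

open SimpleGraph Walk

namespace SimpleGraph.Walk

variable {V : Type*} [Fintype V] [DecidableEq V] {G : SimpleGraph V}

theorem isHamiltonianCycle_of_support_eq {a : V} {t : List V} {p : G.Walk a a}
    (hsupport : p.support = a :: (t ++ [a])) (hnodup : (a :: t).Nodup)
    (hcard : (a :: t).length = Fintype.card V) (hlen : 2 ≤ t.length) :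
    p.IsHamiltonianCycle := by
  have hlength : p.length = t.length + 1 := by
    simpa [hsupport] using (length_support p).symm
  refine isHamiltonianCycle_iff_isCycle_and_length_eq.2 ⟨?_, by simpa [hlength] using hcard⟩
  refine isCycle_iff_isPath_tail_and_le_length.2 ⟨?_, by omega⟩
  have hnil : ¬ p.Nil := by simp [← length_eq_zero_iff, hlength]
  rw [isPath_def, support_tail_of_not_nil _ hnil, hsupport, List.tail_cons]
  exact (List.perm_append_singleton _ _).nodup_iff.2 hnodup

end SimpleGraph.Walk

theorem SimpleGraph.exists_isHamiltonianCycle_of_isChain {V : Type*} [Fintype V]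
    [DecidableEq V] {G : SimpleGraph V} {a : V} {t : List V} (hnodup : (a :: t).Nodup)
    (hcard : (a :: t).length = Fintype.card V) (hlen : 2 ≤ t.length)
    (hchain : (a :: (t ++ [a])).IsChain G.Adj) :
    ∃ p : G.Walk a a, p.IsHamiltonianCycle :=
  ⟨(ofSupport _ (List.cons_ne_nil _ _) hchain).copy (by simp) (by simp),
    isHamiltonianCycle_of_support_eq ((support_copy _ _ _).trans (support_ofSupport _ _))
      hnodup hcard hlen⟩

namespace princeGraph

variable {m n k : ℕ}

instance : DecidableRel (princeGraph m n k).Adj := fun p q ↦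
  inferInstanceAs (Decidable (p ≠ q ∧ |(p.1 : ℤ) - (q.1 : ℤ)| + |(p.2 : ℤ) - (q.2 : ℤ)| = k))

theorem modEq_of_adj (hk : Even k) {p q : Fin m × Fin n} (h : (princeGraph m n k).Adj p q) :
    (p.1 : ℕ) + p.2 ≡ q.1 + q.2 [MOD 2] := by
  obtain ⟨-, hdist⟩ := h
  obtain ⟨r, rfl⟩ := hk
  rw [Nat.modEq_iff_dvd]
  push_cast
  rcases abs_cases ((p.1 : ℤ) - q.1) with ⟨h1, -⟩ | ⟨h1, -⟩ <;>
    rcases abs_cases ((p.2 : ℤ) - q.2) with ⟨h2, -⟩ | ⟨h2, -⟩ <;> omega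

theorem modEq_of_reachable (hk : Even k) {p q : Fin m × Fin n}
    (h : (princeGraph m n k).Reachable p q) : (p.1 : ℕ) + p.2 ≡ q.1 + q.2 [MOD 2] := by
  obtain ⟨w⟩ := h
  induction w with
  | nil => rfl
  | cons hadj _ ih => exact (modEq_of_adj hk hadj).trans ih

theorem not_preconnected_of_even (hk : Even k) (hm : 0 < m) (hn : 1 < n) :
    ¬ (princeGraph m n k).Preconnected := fun h ↦ by
  have := modEq_of_reachable hk (h (⟨0, hm⟩, ⟨0, by omega⟩) (⟨0, hm⟩, ⟨1, hn⟩))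
  simp [Nat.ModEq] at this

theorem le_of_adj {p q : Fin m × Fin n} (h : (princeGraph m n k).Adj p q) :
    k ≤ max (p.1 : ℕ) (m - 1 - p.1) + max (p.2 : ℕ) (n - 1 - p.2) := by
  obtain ⟨-, hdist⟩ := h
  have := p.1.isLt; have := p.2.isLt; have := q.1.isLt; have := q.2.isLt
  rcases abs_cases ((p.1 : ℤ) - q.1) with ⟨h1, -⟩ | ⟨h1, -⟩ <;>
    rcases abs_cases ((p.2 : ℤ) - q.2) with ⟨h2, -⟩ | ⟨h2, -⟩ <;> omega

end princeGraph

/-- The cells of a closed `k`-prince's tour of the 8×8 board, omitting its starting cell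
`(0, 0)`. -/
def princeTour8x8 : ℕ → List (Fin 8 × Fin 8)
  | 1 => [(0,1), (0,2), (0,3), (0,4), (0,5), (0,6), (0,7), (1,7), (1,6), (1,5), (1,4), (1,3),
      (1,2), (1,1), (2,1), (2,2), (2,3), (2,4), (2,5), (2,6), (2,7), (3,7), (3,6), (3,5),
      (3,4), (3,3), (3,2), (3,1), (4,1), (4,2), (4,3), (4,4), (4,5), (4,6), (4,7), (5,7),
      (5,6), (5,5), (5,4), (5,3), (5,2), (5,1), (6,1), (6,2), (6,3), (6,4), (6,5), (6,6),
      (6,7), (7,7), (7,6), (7,5), (7,4), (7,3), (7,2), (7,1), (7,0), (6,0), (5,0), (4,0),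
      (3,0), (2,0), (1,0)]
  | 3 => [(1,2), (2,0), (5,0), (7,1), (6,3), (4,2), (2,1), (3,3), (5,4), (5,7), (3,6), (0,6),
      (1,4), (2,6), (0,5), (1,7), (4,7), (7,7), (6,5), (7,3), (7,6), (4,6), (4,3), (5,1),
      (3,2), (0,2), (1,0), (2,2), (0,1), (1,3), (3,4), (5,3), (4,1), (1,1), (2,3), (4,4),
      (5,6), (7,5), (7,2), (6,4), (6,7), (5,5), (2,5), (3,7), (0,7), (0,4), (1,6), (3,5),
      (2,7), (2,4), (0,3), (1,5), (4,5), (6,6), (7,4), (6,2), (7,0), (4,0), (6,1), (3,1),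
      (5,2), (6,0), (3,0)]
  | 5 => [(5,0), (1,1), (0,5), (3,7), (7,6), (7,1), (6,5), (6,0), (1,0), (5,1), (0,1), (0,6),
      (2,3), (1,7), (1,2), (4,0), (4,5), (7,3), (6,7), (6,2), (5,6), (1,5), (3,2), (2,6),
      (2,1), (0,4), (5,4), (7,7), (7,2), (3,3), (7,4), (4,6), (0,7), (3,5), (3,0), (4,4),
      (2,7), (2,2), (6,1), (5,5), (1,6), (6,6), (4,3), (0,2), (3,4), (5,7), (6,3), (2,4),
      (4,1), (1,3), (5,2), (2,0), (0,3), (3,1), (7,0), (7,5), (2,5), (4,2), (4,7), (6,4),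
      (3,6), (5,3), (1,4)]
  | 7 => [(4,3), (0,6), (3,2), (1,7), (5,4), (1,1), (4,5), (0,2), (3,6), (2,0), (6,3), (1,5),
      (5,2), (2,6), (1,0), (4,4), (0,1), (3,5), (7,2), (2,4), (6,1), (5,7), (2,3), (7,1),
      (3,4), (7,7), (0,7), (3,3), (6,7), (6,0), (7,6), (4,2), (1,6), (5,3), (2,7), (7,5),
      (5,0), (6,6), (4,1), (3,7), (1,2), (4,6), (2,1), (5,5), (7,0), (2,2), (7,4), (1,3),
      (5,6), (0,4), (3,0), (6,4), (0,5), (3,1), (6,5), (4,0), (4,7), (5,1), (1,4), (6,2),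
      (0,3), (7,3), (2,5)]
  | _ => []

theorem prince_tour_8x8_iff_general (k : ℕ) :
    (∃ (v : Fin 8 × Fin 8) (p : (princeGraph 8 8 k).Walk v v), p.IsHamiltonianCycle) ↔
      Odd k ∧ k ≤ 7 := by
  constructor
  · rintro ⟨v, p, hp⟩
    have hconn : (princeGraph 8 8 k).Preconnected :=
      (IsHamiltonian.connected fun _ ↦ ⟨v, p, hp⟩).preconnected
    have hodd : Odd k := Nat.not_even_iff_odd.1 fun hk ↦
      princeGraph.not_preconnected_of_even hk (by norm_num) (by norm_num) hconn
    obtain ⟨q, hq⟩ := hconn.exists_adj_of_nontrivial ((3, 3) : Fin 8 × Fin 8)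
    have hle : k ≤ 8 := by simpa using princeGraph.le_of_adj hq
    obtain ⟨r, rfl⟩ := hodd
    exact ⟨⟨r, rfl⟩, by omega⟩
  · rintro ⟨⟨r, rfl⟩, hle⟩
    have hr : r ≤ 3 := by omega
    refine ⟨(0, 0), exists_isHamiltonianCycle_of_isChain (t := princeTour8x8 (2 * r + 1))
      ?_ ?_ ?_ ?_⟩ <;> interval_cases r <;> decide +kernel

/-- For a positive integer `k`, there exists a closed `k`-prince's tour on the 8×8
chessboard if and only if `k` is odd and `k ≤ 7`. -/
theorem prince_tour_8x8_iff (k : ℕ) (hk : 0 < k) :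
    (∃ (v : Fin 8 × Fin 8) (p : (princeGraph 8 8 k).Walk v v), p.IsHamiltonianCycle) ↔
      Odd k ∧ k ≤ 7 :=
  prince_tour_8x8_iff_general k
end

section
/- There exists a closed 3-prince's tour on the 8×8 chessboard; that is, the graph whose vertices are the cells of the 8×8 board, with two cells (i,j) and (u,v) adjacent if and only if |i-u|+|j-v| = 3, has a Hamiltonian cycle. -/
namespace SimpleGraph

variable {V : Type*} [DecidableEq V] {G : SimpleGraph V}

theorem exists_isHamiltonianCycle_of_isChain_s7 (v : V) (l : List V) (hlen : 2 ≤ l.length)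
    (hnodup : (v :: l).Nodup) (hmem : ∀ w, w ∈ v :: l) (hchain : (v :: l ++ [v]).IsChain G.Adj) :
    ∃ p : G.Walk v v, p.IsHamiltonianCycle := by
  obtain ⟨p, hp⟩ : ∃ p : G.Walk v v, p.support = v :: l ++ [v] :=
    ⟨(Walk.ofSupport (v :: l ++ [v]) (List.cons_ne_nil _ _) hchain).copy (List.head_cons ..)
      (by simp), by rw [Walk.support_copy, Walk.support_ofSupport]⟩
  have hlength : p.length = l.length + 1 := by
    have := congrArg List.length hp
    rw [Walk.length_support] at this
    simpa using this
  have hsupport : p.tail.support = l ++ [v] := by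
    rw [p.support_tail_of_not_nil (by rw [← Walk.length_eq_zero_iff, hlength]; omega), hp,
      List.cons_append, List.tail_cons]
  have hperm : (l ++ [v]).Perm (v :: l) := List.perm_append_singleton v l
  have hpath : p.tail.IsPath := .mk' (hsupport ▸ hperm.nodup_iff.mpr hnodup)
  exact ⟨p, Walk.isCycle_iff_isPath_tail_and_le_length.mpr ⟨hpath, by omega⟩,
    hpath.isHamiltonian_of_mem fun w => hsupport ▸ hperm.mem_iff.mpr (hmem w)⟩

end SimpleGraph

instance inst_s7 (m n k : ℕ) : DecidableRel (princeGraph m n k).Adj :=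
  fun _ _ => inferInstanceAs (Decidable (_ ∧ _))

/-- The cells visited after `(0, 0)`, in order. -/
def prince3Tour8x8 : List (Fin 8 × Fin 8) :=
  [(3,0), (6,0), (7,2), (7,5), (6,7), (3,7), (0,7), (0,4),
   (0,1), (2,0), (1,2), (1,5), (2,7), (0,6), (0,3), (1,1),
   (4,1), (7,1), (5,0), (6,2), (7,0), (5,1), (6,3), (6,6),
   (7,4), (7,7), (4,7), (1,7), (3,6), (5,7), (7,6), (5,5),
   (2,5), (2,2), (1,0), (4,0), (6,1), (7,3), (5,2), (3,1),
   (4,3), (6,4), (5,6), (4,4), (6,5), (4,6), (1,6), (1,3),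
   (3,4), (5,3), (3,2), (0,2), (0,5), (3,5), (2,3), (2,6),
   (1,4), (3,3), (4,5), (2,4), (5,4), (4,2), (2,1)]

/-- There exists a closed 3-prince's tour on the 8×8 chessboard. -/
theorem prince3_tour_8x8 :
    ∃ (v : Fin 8 × Fin 8) (p : (princeGraph 8 8 3).Walk v v), p.IsHamiltonianCycle :=
  ⟨(0, 0), SimpleGraph.exists_isHamiltonianCycle_of_isChain_s7 (0, 0) prince3Tour8x8
    (by decide) (by decide) (by decide) (by decide +kernel)⟩
end
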